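/- arXiv:2402.15906 — 7 statements merged into one kernel-verified Lean document; each statement's English description precedes it below -/
import Mathlib

section
/- If f and g are polynomials over a commutative ring R with formal degrees n and m satisfying n + m ≥ 1, then there exist polynomials p, q ∈ R[X] with deg(p) < m and deg(q) < n such that res_{n,m}(f,g) = p·f + q·g. -/
open Polynomial

/-- The Sylvester matrix of `f` and `g` with respect to the formal degrees `n` and `m`:
the `(n+m) × (n+m)` matrix whose first `m` columns contain the shifted coefficient
sequences of `f` (written with formal degree `n`) and whose last `n` columns contain
the shifted coefficient sequences of `g` (written with formal degree `m`). -/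
def sylvesterMatrix {R : Type*} [CommRing R] (n m : ℕ) (f g : Polynomial R) :
    Matrix (Fin (n + m)) (Fin (n + m)) R :=
  Matrix.of fun i j =>
    if (j : ℕ) < m then
      (if (j : ℕ) ≤ (i : ℕ) ∧ (i : ℕ) ≤ (j : ℕ) + n then f.coeff (n + (j : ℕ) - (i : ℕ)) else 0)
    else
      (if (j : ℕ) - m ≤ (i : ℕ) ∧ (i : ℕ) ≤ ((j : ℕ) - m) + m then
        g.coeff (m + ((j : ℕ) - m) - (i : ℕ)) else 0)

/-- The resultant `res_{n,m}(f,g)` of `f` and `g` with respect to the formal degrees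
`n` and `m`: the determinant of the corresponding Sylvester matrix. -/
def res {R : Type*} [CommRing R] (n m : ℕ) (f g : Polynomial R) : R :=
  (sylvesterMatrix n m f g).det

/-!
`sylvesterMatrix n m f g` is Mathlib's `Polynomial.sylvester g f m n` with the rows, and the
columns within each of its two blocks, listed in reverse order. Hence `res n m f g` agrees with
`Polynomial.resultant g f m n` up to the sign of a permutation, and the Bézout identity for the
latter, `Polynomial.exists_mul_add_mul_eq_C_resultant` (obtained from the adjugate of the Sylvester
map), transfers to `res`.
-/

theorem Matrix.associated_det_submatrix {ι κ R : Type*} [Fintype ι] [DecidableEq ι] [Fintype κ]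
    [DecidableEq κ] [CommRing R] (e₁ e₂ : ι ≃ κ) (A : Matrix κ κ R) :
    Associated (A.submatrix e₁ e₂).det A.det := by
  have he₂ : e₂ = e₁.trans (e₁.symm.trans e₂) := by ext; simp
  rw [he₂]
  change Associated ((A.submatrix id (e₁.symm.trans e₂)).submatrix e₁ e₁).det A.det
  rw [Matrix.det_submatrix_equiv_self, Matrix.det_permute']
  exact associated_unit_mul_left _ _ ((Equiv.Perm.sign _).isUnit.map (Int.castRingHom R))

section

variable {R : Type*} [CommRing R] (n m : ℕ) (f g : R[X])

theorem sylvester_eq_submatrix_sylvesterMatrix :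
    sylvester g f m n = (sylvesterMatrix n m f g).submatrix
      ((finCongr (add_comm m n)).trans Fin.revPerm)
      ((finSumFinEquiv.symm.trans ((Equiv.sumCongr Fin.revPerm Fin.revPerm).trans
        finSumFinEquiv)).trans (finCongr (add_comm m n))) := by
  ext i j
  induction j using Fin.addCases <;>
  · simp only [sylvester, sylvesterMatrix, Matrix.of_apply, Matrix.submatrix_apply,
      Equiv.trans_apply, finCongr_apply, Fin.revPerm_apply, finSumFinEquiv_symm_apply_castAdd,
      finSumFinEquiv_symm_apply_natAdd, Equiv.sumCongr_apply, Sum.map_inl, Sum.map_inr,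
      finSumFinEquiv_apply_left, finSumFinEquiv_apply_right, Fin.addCases_left,
      Fin.addCases_right, Set.mem_Icc, Fin.val_cast, Fin.val_castAdd, Fin.val_natAdd,
      Fin.val_rev]
    split_ifs <;> first | omega | rfl | (congr 1; omega)

theorem associated_resultant_res : Associated (resultant g f m n) (res n m f g) := by
  rw [resultant, sylvester_eq_submatrix_sylvesterMatrix]
  exact Matrix.associated_det_submatrix _ _ _

end

/-- if `n + m ≥ 1` then there are polynomials `p, q` with
`deg p < m`, `deg q < n` and `res_{n,m}(f,g) = p·f + q·g`. -/
theorem res_mem_span {R : Type*} [CommRing R] (n m : ℕ) (f g : Polynomial R)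
    (hf : f.natDegree ≤ n) (hg : g.natDegree ≤ m) (hnm : 1 ≤ n + m) :
    ∃ p q : Polynomial R, p.degree < (m : ℕ) ∧ q.degree < (n : ℕ) ∧
      C (res n m f g) = p * f + q * g := by
  obtain ⟨u, hu⟩ := associated_resultant_res n m f g
  obtain ⟨p, q, hp, hq, hpq⟩ := exists_mul_add_mul_eq_C_resultant g f hg hf (by omega)
  refine ⟨(u : R) • q, (u : R) • p, (degree_smul_le _ _).trans_lt hq,
    (degree_smul_le _ _).trans_lt hp, ?_⟩
  rw [← hu, C_mul, ← hpq, smul_eq_C_mul, smul_eq_C_mul]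
  ring
end

section
/- Let R ⊆ R' be commutative rings and let f = α·∏_{i=1}^{n}(X - α_i) and g = β·∏_{j=1}^{m}(X - β_j) be polynomials in R[X] splitting over R' with α, β ∈ R and α_i, β_j ∈ R'. Then res_{n,m}(f,g) = α^m · β^n · ∏_{i,j}(α_i - β_j), and also res_{n,m}(f,g) = α^m · ∏_{i=1}^n g(α_i). -/
open Polynomial

open Matrix Finset

/-- The polynomial whose coefficient sequence forms column `j` of the Sylvester matrix. -/
noncomputable def colp {R : Type*} [CommRing R] (n m : ℕ) (f g : Polynomial R)
    (j : Fin (n + m)) : Polynomial R :=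
  if (j : ℕ) < m then f * X ^ (m - 1 - (j : ℕ)) else g * X ^ (n - 1 - ((j : ℕ) - m))

lemma sylvester_eq_colp_coeff {R : Type*} [CommRing R] (n m : ℕ) (f g : Polynomial R)
    (hf : f.natDegree ≤ n) (hg : g.natDegree ≤ m) (i j : Fin (n + m)) :
    sylvesterMatrix n m f g i j = (colp n m f g j).coeff (n + m - 1 - (i : ℕ)) := by
  have hi := i.isLt
  have hj := j.isLt
  rw [sylvesterMatrix, colp, Matrix.of_apply]
  by_cases hjm : (j : ℕ) < m
  · rw [if_pos hjm, if_pos hjm, Polynomial.coeff_mul_X_pow']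
    by_cases h1 : (j : ℕ) ≤ (i : ℕ) ∧ (i : ℕ) ≤ (j : ℕ) + n
    · rw [if_pos h1, if_pos (by omega)]
      congr 1
      omega
    · rw [if_neg h1]
      rcases Nat.lt_or_ge (i : ℕ) (j : ℕ) with h2 | h2
      · rw [if_pos (by omega)]
        exact (Polynomial.coeff_eq_zero_of_natDegree_lt (lt_of_le_of_lt hf (by omega))).symm
      · rw [if_neg (by omega)]
  · rw [if_neg hjm, if_neg hjm, Polynomial.coeff_mul_X_pow']
    by_cases h1 : (j : ℕ) - m ≤ (i : ℕ) ∧ (i : ℕ) ≤ ((j : ℕ) - m) + m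
    · rw [if_pos h1, if_pos (by omega)]
      congr 1
      omega
    · rw [if_neg h1]
      rcases Nat.lt_or_ge (i : ℕ) ((j : ℕ) - m) with h2 | h2
      · rw [if_pos (by omega)]
        exact (Polynomial.coeff_eq_zero_of_natDegree_lt (lt_of_le_of_lt hg (by omega))).symm
      · rw [if_neg (by omega)]

lemma res_map {R R' : Type*} [CommRing R] [CommRing R'] (φ : R →+* R') (n m : ℕ)
    (f g : Polynomial R) : res n m (f.map φ) (g.map φ) = φ (res n m f g) := by
  rw [res, res, RingHom.map_det]
  congr 1
  ext i j
  simp only [sylvesterMatrix, RingHom.mapMatrix_apply, Matrix.map_apply, Matrix.of_apply,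
    Polynomial.coeff_map, apply_ite φ, map_zero]


lemma prodIoi_eq {M : Type*} [CommMonoid M] {N : ℕ} (F : Fin N → Fin N → M) :
    ∏ k, ∏ l ∈ Finset.Ioi k, F k l = ∏ k, ∏ l, if k < l then F k l else 1 := by
  refine Finset.prod_congr rfl fun k _ => ?_
  rw [← Finset.prod_filter]
  congr 1
  ext l
  simp

lemma det_vandermonde_rev {R : Type*} [CommRing R] {N : ℕ} (v : Fin N → R) :
    (Matrix.of fun i j : Fin N => v i ^ (N - 1 - (j : ℕ))).det
      = ∏ i : Fin N, ∏ j ∈ Finset.Ioi i, (v i - v j) := by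
  have h : (Matrix.of fun i j : Fin N => v i ^ (N - 1 - (j : ℕ)))
      = (Matrix.vandermonde fun i => v i.rev).submatrix Fin.revPerm Fin.revPerm := by
    ext i j
    simp only [Matrix.submatrix_apply, Fin.revPerm_apply, Matrix.vandermonde_apply,
      Fin.rev_rev, Fin.val_rev, Matrix.of_apply]
    congr 1
    omega
  rw [h, Matrix.det_submatrix_equiv_self, Matrix.det_vandermonde]
  rw [prodIoi_eq, prodIoi_eq]
  rw [Fintype.prod_equiv Fin.revPerm _
    (fun i => ∏ j, if j < i then v j - v i else 1) ?_]
  · rw [Finset.prod_comm]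
  · intro i
    refine Fintype.prod_equiv Fin.revPerm _ _ fun j => ?_
    simp only [Fin.revPerm_apply, Fin.rev_rev, Fin.rev_lt_rev]

lemma eval_eq_sum_rev {R : Type*} [CommRing R] {N : ℕ} (p : R[X]) (hp : p.natDegree < N) (x : R) :
    ∑ i : Fin N, p.coeff (N - 1 - (i : ℕ)) * x ^ (N - 1 - (i : ℕ)) = p.eval x := by
  rw [Polynomial.eval_eq_sum_range' hp, ← Fin.sum_univ_eq_sum_range]
  refine Fintype.sum_equiv Fin.revPerm _ _ fun i => ?_
  simp only [Fin.revPerm_apply, Fin.val_rev]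
  congr 2 <;> omega

lemma res_key {R : Type*} [CommRing R] [IsDomain R] (n m : ℕ) (α β : R)
    (a : Fin n → R) (b : Fin m → R)
    (hinj : Function.Injective (Sum.elim b a : Fin m ⊕ Fin n → R)) :
    res n m (C α * ∏ i, (X - C (a i))) (C β * ∏ j, (X - C (b j))) =
      α ^ m * β ^ n * ∏ i, ∏ j, (a i - b j) := by
  set f : Polynomial R := C α * ∏ i, (X - C (a i)) with hf
  set g : Polynomial R := C β * ∏ j, (X - C (b j)) with hg
  have hPa : (∏ i, (X - C (a i))).natDegree = n := by
    rw [natDegree_prod_of_monic _ _ (fun i _ => monic_X_sub_C _)]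
    simp
  have hPb : (∏ j, (X - C (b j))).natDegree = m := by
    rw [natDegree_prod_of_monic _ _ (fun j _ => monic_X_sub_C _)]
    simp
  have hfd : f.natDegree ≤ n := natDegree_mul_le.trans (by simp [hPa])
  have hgd : g.natDegree ≤ m := natDegree_mul_le.trans (by simp [hPb])
  have hfe : ∀ x : R, f.eval x = α * ∏ i, (x - a i) := by
    intro x; simp [hf, eval_prod]
  have hge : ∀ x : R, g.eval x = β * ∏ j, (x - b j) := by
    intro x; simp [hg, eval_prod]
  have hroot_f : ∀ i, f.eval (a i) = 0 := by
    intro i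
    rw [hfe]
    exact mul_eq_zero_of_right _ (Finset.prod_eq_zero (Finset.mem_univ i) (by simp))
  have hroot_g : ∀ j, g.eval (b j) = 0 := by
    intro j
    rw [hge]
    exact mul_eq_zero_of_right _ (Finset.prod_eq_zero (Finset.mem_univ j) (by simp))
  set σ : Fin m ⊕ Fin n ≃ Fin (n + m) := finSumFinEquiv.trans (finCongr (Nat.add_comm m n))
    with hσ
  have hσl : ∀ j : Fin m, ((σ (Sum.inl j) : Fin (n+m)) : ℕ) = (j : ℕ) := by
    intro j; simp [hσ]
  have hσr : ∀ i : Fin n, ((σ (Sum.inr i) : Fin (n+m)) : ℕ) = m + (i : ℕ) := by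
    intro i; simp [hσ]; omega
  set t : Fin (n + m) → R := fun k => Sum.elim b a (σ.symm k) with ht
  have htσ : ∀ x, t (σ x) = Sum.elim b a x := by
    intro x; simp [ht]
  set T : Matrix (Fin (n + m)) (Fin (n + m)) R :=
    Matrix.of fun k i => t k ^ (n + m - 1 - (i : ℕ)) with hT
  set E : Matrix (Fin (n + m)) (Fin (n + m)) R :=
    Matrix.of fun k j => (colp n m f g j).eval (t k) with hE
  have hTS : T * sylvesterMatrix n m f g = E := by
    ext k j
    rw [Matrix.mul_apply]
    have hd : (colp n m f g j).natDegree < n + m := by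
      have hj := j.isLt
      rw [colp]
      split
      · exact lt_of_le_of_lt natDegree_mul_le (by rw [natDegree_X_pow]; omega)
      · exact lt_of_le_of_lt natDegree_mul_le (by rw [natDegree_X_pow]; omega)
    rw [hE, Matrix.of_apply, ← eval_eq_sum_rev _ hd (t k)]
    refine Finset.sum_congr rfl fun i _ => ?_
    rw [sylvester_eq_colp_coeff n m f g hfd hgd, hT, Matrix.of_apply]
    ring
  set B : Matrix (Fin m) (Fin m) R :=
    Matrix.of fun j j' => (b j) ^ (m - 1 - (j' : ℕ)) * f.eval (b j) with hB
  set A : Matrix (Fin n) (Fin n) R :=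
    Matrix.of fun i i' => (a i) ^ (n - 1 - (i' : ℕ)) * g.eval (a i) with hA
  have hEblock : E.submatrix σ σ = Matrix.fromBlocks B 0 0 A := by
    ext x y
    rcases x with j | i <;> rcases y with j' | i' <;>
      simp only [Matrix.submatrix_apply, hE, Matrix.of_apply, htσ, Sum.elim_inl, Sum.elim_inr,
        Matrix.fromBlocks_apply₁₁, Matrix.fromBlocks_apply₁₂, Matrix.fromBlocks_apply₂₁,
        Matrix.fromBlocks_apply₂₂, Matrix.zero_apply, colp]
    · rw [if_pos (by rw [hσl]; exact j'.isLt), hσl, eval_mul, eval_pow, eval_X, hB,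
        Matrix.of_apply, mul_comm]
    · rw [if_neg (by rw [hσr]; omega), hσr, eval_mul, hroot_g, zero_mul]
    · rw [if_pos (by rw [hσl]; exact j'.isLt), eval_mul, hroot_f, zero_mul]
    · rw [if_neg (by rw [hσr]; omega), hσr, eval_mul, eval_pow, eval_X, hA,
        Matrix.of_apply, Nat.add_sub_cancel_left, mul_comm]
  have hdetE : E.det = B.det * A.det := by
    rw [← Matrix.det_submatrix_equiv_self σ E, hEblock, Matrix.det_fromBlocks_zero₂₁]
  have hdetB : B.det = (∏ j, f.eval (b j)) * ∏ j, ∏ j' ∈ Finset.Ioi j, (b j - b j') := by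
    have : B = Matrix.diagonal (fun j => f.eval (b j)) *
        Matrix.of (fun j j' : Fin m => (b j) ^ (m - 1 - (j' : ℕ))) := by
      ext j j'
      rw [Matrix.diagonal_mul, hB, Matrix.of_apply, Matrix.of_apply, mul_comm]
    rw [this, Matrix.det_mul, Matrix.det_diagonal, det_vandermonde_rev]
  have hdetA : A.det = (∏ i, g.eval (a i)) * ∏ i, ∏ i' ∈ Finset.Ioi i, (a i - a i') := by
    have : A = Matrix.diagonal (fun i => g.eval (a i)) *
        Matrix.of (fun i i' : Fin n => (a i) ^ (n - 1 - (i' : ℕ))) := by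
      ext i i'
      rw [Matrix.diagonal_mul, hA, Matrix.of_apply, Matrix.of_apply, mul_comm]
    rw [this, Matrix.det_mul, Matrix.det_diagonal, det_vandermonde_rev]
  have hdetT : T.det = ∏ k, ∏ l ∈ Finset.Ioi k, (t k - t l) := det_vandermonde_rev t
  -- split the big Vandermonde product
  have hlt_ll : ∀ (j j' : Fin m), (σ (Sum.inl j) < σ (Sum.inl j')) ↔ j < j' := by
    intro j j'; rw [Fin.lt_def, hσl, hσl, Fin.lt_def]
  have hlt_lr : ∀ (j : Fin m) (i : Fin n), σ (Sum.inl j) < σ (Sum.inr i) := by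
    intro j i; rw [Fin.lt_def, hσl, hσr]; omega
  have hlt_rl : ∀ (i : Fin n) (j : Fin m), ¬ σ (Sum.inr i) < σ (Sum.inl j) := by
    intro i j; rw [Fin.lt_def, hσr, hσl]; omega
  have hlt_rr : ∀ (i i' : Fin n), (σ (Sum.inr i) < σ (Sum.inr i')) ↔ i < i' := by
    intro i i'; rw [Fin.lt_def, hσr, hσr, Fin.lt_def]; omega
  have hsplit : ∏ k, ∏ l ∈ Finset.Ioi k, (t k - t l) =
      ((∏ j, ∏ j' ∈ Finset.Ioi j, (b j - b j')) * ∏ j : Fin m, ∏ i : Fin n, (b j - a i)) *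
        ∏ i, ∏ i' ∈ Finset.Ioi i, (a i - a i') := by
    rw [prodIoi_eq]
    have e1 : ∏ k, (∏ l, if k < l then t k - t l else 1) =
        ∏ x : Fin m ⊕ Fin n, ∏ y : Fin m ⊕ Fin n,
          (if σ x < σ y then Sum.elim b a x - Sum.elim b a y else 1) := by
      refine (Fintype.prod_equiv σ _ _ fun x => ?_).symm
      refine Fintype.prod_equiv σ _ _ fun y => ?_
      rw [htσ, htσ]
    rw [e1, Fintype.prod_sum_type]
    congr 1
    · simp only [Fintype.prod_sum_type, Sum.elim_inl, Sum.elim_inr]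
      rw [Finset.prod_mul_distrib]
      congr 1
      · rw [prodIoi_eq]
        exact Finset.prod_congr rfl fun j _ => Finset.prod_congr rfl fun j' _ =>
          if_congr (hlt_ll j j') rfl rfl
      · exact Finset.prod_congr rfl fun j _ => Finset.prod_congr rfl fun i _ =>
          if_pos (hlt_lr j i)
    · simp only [Fintype.prod_sum_type, Sum.elim_inl, Sum.elim_inr]
      have : ∀ i : Fin n, (∏ j' : Fin m,
          if σ (Sum.inr i) < σ (Sum.inl j') then a i - b j' else 1) = 1 := by
        intro i
        exact Finset.prod_eq_one fun j' _ => if_neg (hlt_rl i j')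
      simp only [this, one_mul]
      rw [prodIoi_eq]
      exact Finset.prod_congr rfl fun i _ => Finset.prod_congr rfl fun i' _ =>
        if_congr (hlt_rr i i') rfl rfl
  have hT0 : T.det ≠ 0 := by
    rw [hdetT]
    rw [Finset.prod_ne_zero_iff]
    intro k _
    rw [Finset.prod_ne_zero_iff]
    intro l hl
    refine sub_ne_zero.mpr fun hc => ?_
    have : k = l := by
      have := hinj.comp σ.symm.injective
      exact this hc
    exact absurd this (Finset.mem_Ioi.mp hl).ne
  have hfb : ∏ j, f.eval (b j) = α ^ m * ∏ j : Fin m, ∏ i : Fin n, (b j - a i) := by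
    rw [Finset.prod_congr rfl fun j _ => hfe (b j), Finset.prod_mul_distrib,
      Finset.prod_const, Finset.card_univ, Fintype.card_fin]
  have hga : ∏ i, g.eval (a i) = β ^ n * ∏ i : Fin n, ∏ j : Fin m, (a i - b j) := by
    rw [Finset.prod_congr rfl fun i _ => hge (a i), Finset.prod_mul_distrib,
      Finset.prod_const, Finset.card_univ, Fintype.card_fin]
  have main : T.det * res n m f g =
      T.det * (α ^ m * β ^ n * ∏ i, ∏ j, (a i - b j)) := by
    conv_lhs => rw [res, ← Matrix.det_mul, hTS, hdetE, hdetB, hdetA, hfb, hga]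
    rw [hdetT, hsplit]
    ring
  exact mul_left_cancel₀ hT0 main
/-- if `f = α·∏ (X - αᵢ)` and `g = β·∏ (X - βⱼ)` split over an
extension `R'` of `R`, then `res_{n,m}(f,g) = α^m β^n ∏ᵢⱼ (αᵢ - βⱼ)` and also
`res_{n,m}(f,g) = α^m ∏ᵢ g(αᵢ)`. -/
theorem res_eq_prod_roots {R R' : Type*} [CommRing R] [CommRing R'] [Algebra R R']
    (n m : ℕ) (f g : Polynomial R) (α β : R) (a : Fin n → R') (b : Fin m → R')
    (hf : f.map (algebraMap R R') = C (algebraMap R R' α) * ∏ i, (X - C (a i)))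
    (hg : g.map (algebraMap R R') = C (algebraMap R R' β) * ∏ j, (X - C (b j))) :
    algebraMap R R' (res n m f g) =
        algebraMap R R' α ^ m * algebraMap R R' β ^ n * ∏ i, ∏ j, (a i - b j) ∧
    algebraMap R R' (res n m f g) =
        algebraMap R R' α ^ m * ∏ i, (g.map (algebraMap R R')).eval (a i) := by
  classical
  have hmain : algebraMap R R' (res n m f g) =
      algebraMap R R' α ^ m * algebraMap R R' β ^ n * ∏ i, ∏ j, (a i - b j) := by
    set ι := (Fin n ⊕ Fin m) ⊕ Bool with hι
    set v : ι → R' :=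
      Sum.elim (Sum.elim a b) (fun s => if s then algebraMap R R' α else algebraMap R R' β)
      with hv
    set φ : MvPolynomial ι ℤ →+* R' := MvPolynomial.eval₂Hom (Int.castRingHom R') v with hφ
    set Au : Fin n → MvPolynomial ι ℤ := fun i => MvPolynomial.X (Sum.inl (Sum.inl i)) with hAu
    set Bu : Fin m → MvPolynomial ι ℤ := fun j => MvPolynomial.X (Sum.inl (Sum.inr j)) with hBu
    set αu : MvPolynomial ι ℤ := MvPolynomial.X (Sum.inr true) with hαu
    set βu : MvPolynomial ι ℤ := MvPolynomial.X (Sum.inr false) with hβu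
    have hinj : Function.Injective (Sum.elim Bu Au : Fin m ⊕ Fin n → MvPolynomial ι ℤ) := by
      have he : (Sum.elim Bu Au : Fin m ⊕ Fin n → MvPolynomial ι ℤ) =
          MvPolynomial.X ∘ (Sum.inl ∘ Sum.swap) := by
        funext x; rcases x with j | i <;> rfl
      rw [he]
      exact MvPolynomial.X_injective.comp (Sum.inl_injective.comp (Function.LeftInverse.injective Sum.swap_leftInverse))
    have hFu : (C αu * ∏ i, (X - C (Au i))).map φ = f.map (algebraMap R R') := by
      rw [hf, Polynomial.map_mul, Polynomial.map_C, Polynomial.map_prod]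
      simp [hφ, hαu, hAu, hv, Polynomial.map_sub]
    have hGu : (C βu * ∏ j, (X - C (Bu j))).map φ = g.map (algebraMap R R') := by
      rw [hg, Polynomial.map_mul, Polynomial.map_C, Polynomial.map_prod]
      simp [hφ, hβu, hBu, hv, Polynomial.map_sub]
    calc algebraMap R R' (res n m f g)
        = res n m (f.map (algebraMap R R')) (g.map (algebraMap R R')) :=
          (res_map _ n m f g).symm
      _ = res n m ((C αu * ∏ i, (X - C (Au i))).map φ) ((C βu * ∏ j, (X - C (Bu j))).map φ) := by
          rw [hFu, hGu]
      _ = φ (res n m (C αu * ∏ i, (X - C (Au i))) (C βu * ∏ j, (X - C (Bu j)))) :=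
          res_map φ n m _ _
      _ = φ (αu ^ m * βu ^ n * ∏ i, ∏ j, (Au i - Bu j)) := by
          rw [res_key n m αu βu Au Bu hinj]
      _ = algebraMap R R' α ^ m * algebraMap R R' β ^ n * ∏ i, ∏ j, (a i - b j) := by
          simp [hφ, hαu, hβu, hAu, hBu, hv]
  refine ⟨hmain, ?_⟩
  rw [hmain]
  have h2 : ∀ i, (g.map (algebraMap R R')).eval (a i) =
      algebraMap R R' β * ∏ j, (a i - b j) := by
    intro i; rw [hg]; simp [eval_prod]
  rw [Finset.prod_congr rfl fun i _ => h2 i, Finset.prod_mul_distrib, Finset.prod_const,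
    Finset.card_univ, Fintype.card_fin]
  ring
end

section
/- Let k be a field and let f, g ∈ k[X] with f monic of degree n and deg(g) < n. Then the following are equivalent: (1) res_{n,n}(f,g) is invertible in k; (2) the ideals (f,g) and (f*, g*) both equal k[X], where f* and g* are the reciprocal polynomials taken with formal degree n. -/
/-!
Reversing the order of the rows and of the columns turns `sylvesterMatrix n m f g` into Mathlib's
`sylvester f g n m`, while reading its entries as coefficients of the reciprocals identifies it
with `sylvester g* f* m n`. Hence `res_{n,n}(f,g)` is the resultant of `(f, g)` and also of
`(g*, f*)`. A unit resultant yields a Bézout relation for each pair; conversely, for monic `f`,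
coprimality of `f` and `g` makes the resultant a unit.
-/

open Polynomial

section

variable {R : Type*} [CommRing R]

theorem sylvesterMatrix_eq_submatrix_rev (n m : ℕ) (f g : R[X]) :
    sylvesterMatrix n m f g = (sylvester f g n m).submatrix Fin.rev Fin.rev := by
  ext i j
  obtain ⟨j, rfl⟩ := Fin.rev_surjective j
  have := i.isLt
  induction j using Fin.addCases with
  | left j =>
    simp only [sylvesterMatrix, sylvester, Matrix.of_apply, Matrix.submatrix_apply, Fin.rev_rev,
      Fin.addCases_left, Fin.val_rev, Fin.val_castAdd, Set.mem_Icc]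
    split_ifs <;> first | rfl | omega | (congr 1; omega)
  | right j =>
    simp only [sylvesterMatrix, sylvester, Matrix.of_apply, Matrix.submatrix_apply, Fin.rev_rev,
      Fin.addCases_right, Fin.val_rev, Fin.val_natAdd, Set.mem_Icc]
    split_ifs <;> first | rfl | omega | (congr 1; omega)

theorem res_eq_resultant (n m : ℕ) (f g : R[X]) :
    res n m f g = resultant f g n m := by
  rw [res, sylvesterMatrix_eq_submatrix_rev, resultant]
  exact Matrix.det_submatrix_equiv_self Fin.revPerm _

theorem sylvesterMatrix_eq_submatrix_sylvester_reflect (n m : ℕ) (f g : R[X]) :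
    sylvesterMatrix n m f g = (sylvester (g.reflect m) (f.reflect n) m n).submatrix
      (Fin.cast (add_comm n m)) (Fin.cast (add_comm n m)) := by
  ext i j
  obtain ⟨j, rfl⟩ := (finCongr (add_comm m n)).surjective j
  have := i.isLt
  induction j using Fin.addCases with
  | left j =>
    simp only [sylvesterMatrix, sylvester, Matrix.of_apply, Matrix.submatrix_apply, finCongr_apply,
      Fin.cast_cast, Fin.cast_eq_self, Fin.addCases_left, Fin.val_cast, Fin.val_castAdd,
      Set.mem_Icc, coeff_reflect, j.isLt, if_true]
    split_ifs <;> first | rfl | omega | (rw [revAt_le (by omega)]; congr 1; omega)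
  | right j =>
    simp only [sylvesterMatrix, sylvester, Matrix.of_apply, Matrix.submatrix_apply, finCongr_apply,
      Fin.cast_cast, Fin.cast_eq_self, Fin.addCases_right, Fin.val_cast, Fin.val_natAdd,
      Set.mem_Icc, coeff_reflect]
    split_ifs <;> first | rfl | omega | (rw [revAt_le (by omega)]; congr 1; omega)

theorem res_eq_resultant_reflect (n m : ℕ) (f g : R[X]) :
    res n m f g = resultant (g.reflect m) (f.reflect n) m n := by
  rw [res, sylvesterMatrix_eq_submatrix_sylvester_reflect, resultant]
  exact Matrix.det_submatrix_equiv_self (finCongr (add_comm n m)) _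

theorem Polynomial.Monic.resultant_of_natDegree_le {f g : R[X]} {m : ℕ}
    (hf : f.Monic) (hg : g.natDegree ≤ m) : resultant f g f.natDegree m = resultant f g := by
  obtain ⟨d, rfl⟩ := Nat.exists_eq_add_of_le hg
  rw [resultant_add_right_deg _ _ _ _ _ le_rfl, hf.coeff_natDegree, one_pow, one_mul]

theorem isCoprime_of_isUnit_resultant {f g : R[X]} {m n : ℕ}
    (hf : f.natDegree ≤ m) (hg : g.natDegree ≤ n) (hmn : m ≠ 0 ∨ n ≠ 0)
    (h : IsUnit (resultant f g m n)) : IsCoprime f g := by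
  obtain ⟨p, q, -, -, e⟩ := exists_mul_add_mul_eq_C_resultant f g hf hg hmn
  refine ⟨C (↑h.unit⁻¹ : R) * p, C (↑h.unit⁻¹ : R) * q, ?_⟩
  have hu : C (↑h.unit⁻¹ : R) * C (resultant f g m n) = 1 := by
    rw [← C_mul, IsUnit.val_inv_mul, C_1]
  linear_combination C (↑h.unit⁻¹ : R) * e + hu

theorem isCoprime_reflect_of_isUnit_res {n : ℕ} {f g : R[X]}
    (hf : f.Monic) (hfn : f.natDegree = n) (hg : g.natDegree ≤ n) (h : IsUnit (res n n f g)) :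
    IsCoprime (f.reflect n) (g.reflect n) := by
  obtain rfl | hn := eq_or_ne n 0
  · rw [eq_one_of_monic_natDegree_zero hf hfn, reflect_one, pow_zero]
    exact isCoprime_one_left
  rw [res_eq_resultant_reflect] at h
  refine (isCoprime_of_isUnit_resultant ?_ ?_ (Or.inl hn) h).symm <;>
    exact natDegree_reflect_le.trans (max_le le_rfl (by omega))

end

/-- for `f` monic of degree `n` and `deg g < n` over a field `k`,
`res_{n,n}(f,g)` is invertible iff `(f,g) = k[X]` and `(f*,g*) = k[X]`, where the
reciprocals are taken with formal degree `n`. -/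
theorem isUnit_res_iff_span {k : Type*} [Field k] (n : ℕ) (f g : Polynomial k)
    (hf : f.Monic) (hfn : f.natDegree = n) (hg : g.degree < (n : ℕ)) :
    IsUnit (res n n f g) ↔
      (Ideal.span {f, g} = ⊤ ∧ Ideal.span {f.reflect n, g.reflect n} = ⊤) := by
  have hgn : g.natDegree ≤ n := natDegree_le_iff_degree_le.2 hg.le
  have hcop : IsUnit (res n n f g) ↔ IsCoprime f g := by
    rw [res_eq_resultant, ← hfn, hf.resultant_of_natDegree_le (hfn ▸ hgn),
      isUnit_resultant_iff_isCoprime hf]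
  simp only [Ideal.span_insert, Ideal.sup_eq_top_iff_isCoprime]
  exact ⟨fun h ↦ ⟨hcop.1 h, isCoprime_reflect_of_isUnit_res hf hfn hgn h⟩,
    fun h ↦ hcop.2 h.1⟩
end

section
/- Let f₁, g₁, p₁, q₁ and f₂, g₂, p₂, q₂ be polynomials in ℤ[X] such that the 2×2 matrices M₁ = [[f₁, -q₁],[g₁, p₁]] and M₂ = [[f₂, -q₂],[g₂, p₂]] both have determinant 1, f₁ is monic of degree n₁ with deg(g₁) < n₁, deg(p₁) < n₁ - 1, deg(q₁) < n₁, and likewise for index 2 with degree n₂. Define [[f₃, -q₃],[g₃, p₃]] := M₁ · M₂. Then f₃ = f₁f₂ - q₁g₂ is monic of degree n₁ + n₂, g₃ = g₁f₂ + p₁g₂ has degree strictly less than n₁ + n₂, and the matrix [[f₃, -q₃],[g₃, p₃]] has determinant 1. -/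
open Polynomial

theorem Polynomial.degree_mul_lt_of_lt_of_le {R : Type*} [Semiring R] {a b : R[X]} {n m : ℕ}
    (ha : a.degree < n) (hb : b.degree ≤ m) : (a * b).degree < ↑(n + m) := by
  refine (degree_mul_le a b).trans_lt ?_
  rcases eq_or_ne b 0 with rfl | hb0
  · simp
  · push_cast
    exact WithBot.add_lt_add_of_lt_of_le (degree_ne_bot.mpr hb0) ha hb

theorem naive_sum_wellDefined_general (n₁ n₂ : ℕ)
    (f₁ g₁ p₁ q₁ f₂ g₂ p₂ q₂ : Polynomial ℤ)
    (hf₁ : f₁.Monic) (hf₁n : f₁.natDegree = n₁) (hg₁ : g₁.degree < (n₁ : ℕ))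
    (hp₁ : p₁.degree + 1 < (n₁ : ℕ)) (hq₁ : q₁.degree < (n₁ : ℕ))
    (hf₂ : f₂.Monic) (hf₂n : f₂.natDegree = n₂) (hg₂ : g₂.degree < (n₂ : ℕ))
    (hdet₁ : Matrix.det !![f₁, -q₁; g₁, p₁] = 1)
    (hdet₂ : Matrix.det !![f₂, -q₂; g₂, p₂] = 1) :
    (!![f₁, -q₁; g₁, p₁] * !![f₂, -q₂; g₂, p₂]) 0 0 = f₁ * f₂ - q₁ * g₂ ∧
    (!![f₁, -q₁; g₁, p₁] * !![f₂, -q₂; g₂, p₂]) 1 0 = g₁ * f₂ + p₁ * g₂ ∧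
    (f₁ * f₂ - q₁ * g₂).Monic ∧
    (f₁ * f₂ - q₁ * g₂).natDegree = n₁ + n₂ ∧
    (g₁ * f₂ + p₁ * g₂).degree < ((n₁ + n₂ : ℕ)) ∧
    Matrix.det (!![f₁, -q₁; g₁, p₁] * !![f₂, -q₂; g₂, p₂]) = 1 := by
  have hf₂le : f₂.degree ≤ n₂ := hf₂n ▸ degree_le_natDegree
  have hp₁' : p₁.degree < n₁ := (le_add_of_nonneg_right zero_le_one).trans_lt hp₁
  have hff : (f₁ * f₂).degree = ↑(n₁ + n₂) := by
    rw [degree_eq_natDegree (hf₁.mul hf₂).ne_zero, hf₁.natDegree_mul hf₂, hf₁n, hf₂n]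
  have hqg : (q₁ * g₂).degree < (f₁ * f₂).degree :=
    hff ▸ degree_mul_lt_of_lt_of_le hq₁ hg₂.le
  have hprod := Matrix.mul_fin_two f₁ (-q₁) g₁ p₁ f₂ (-q₂) g₂ p₂
  refine ⟨?_, ?_, (hf₁.mul hf₂).sub_of_left hqg, ?_, ?_, ?_⟩
  · simp [hprod, sub_eq_add_neg]
  · simp [hprod]
  · exact natDegree_eq_of_degree_eq_some (degree_sub_eq_left_of_degree_lt hqg ▸ hff)
  · exact (degree_add_le _ _).trans_lt <| max_lt (degree_mul_lt_of_lt_of_le hg₁ hf₂le)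
      (degree_mul_lt_of_lt_of_le hp₁' hg₂.le)
  · rw [Matrix.det_mul, hdet₁, hdet₂, mul_one]

/-- if `M₁ = [[f₁,-q₁],[g₁,p₁]]` and `M₂ = [[f₂,-q₂],[g₂,p₂]]` are
matrices over `ℤ[X]` of determinant `1` with `f₁` monic of degree `n₁`, `deg g₁ < n₁`,
`deg p₁ < n₁ - 1`, `deg q₁ < n₁` (and likewise for index 2 with degree `n₂`), then in
the product `M₁·M₂ = [[f₃,-q₃],[g₃,p₃]]` the entry `f₃ = f₁f₂ - q₁g₂` is monic of
degree `n₁+n₂`, `g₃ = g₁f₂ + p₁g₂` has degree `< n₁+n₂`, and the product matrix has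
determinant `1`. -/
theorem naive_sum_wellDefined (n₁ n₂ : ℕ)
    (f₁ g₁ p₁ q₁ f₂ g₂ p₂ q₂ : Polynomial ℤ)
    (hf₁ : f₁.Monic) (hf₁n : f₁.natDegree = n₁) (hg₁ : g₁.degree < (n₁ : ℕ))
    (hp₁ : p₁.degree + 1 < (n₁ : ℕ)) (hq₁ : q₁.degree < (n₁ : ℕ))
    (hf₂ : f₂.Monic) (hf₂n : f₂.natDegree = n₂) (hg₂ : g₂.degree < (n₂ : ℕ))
    (hp₂ : p₂.degree + 1 < (n₂ : ℕ)) (hq₂ : q₂.degree < (n₂ : ℕ))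
    (hdet₁ : Matrix.det !![f₁, -q₁; g₁, p₁] = 1)
    (hdet₂ : Matrix.det !![f₂, -q₂; g₂, p₂] = 1) :
    (!![f₁, -q₁; g₁, p₁] * !![f₂, -q₂; g₂, p₂]) 0 0 = f₁ * f₂ - q₁ * g₂ ∧
    (!![f₁, -q₁; g₁, p₁] * !![f₂, -q₂; g₂, p₂]) 1 0 = g₁ * f₂ + p₁ * g₂ ∧
    (f₁ * f₂ - q₁ * g₂).Monic ∧
    (f₁ * f₂ - q₁ * g₂).natDegree = n₁ + n₂ ∧
    (g₁ * f₂ + p₁ * g₂).degree < ((n₁ + n₂ : ℕ)) ∧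
    Matrix.det (!![f₁, -q₁; g₁, p₁] * !![f₂, -q₂; g₂, p₂]) = 1 :=
  naive_sum_wellDefined_general n₁ n₂ f₁ g₁ p₁ q₁ f₂ g₂ p₂ q₂ hf₁ hf₁n hg₁ hp₁ hq₁ hf₂ hf₂n hg₂
    hdet₁ hdet₂
end

section
/- The pair of polynomials (X² + 2T·X + 2T, X + 1) over ℤ[T] satisfies: the first is monic of degree 2, the second has degree < 2, and res_{2,2}(X² + 2TX + 2T, X + 1) is a unit in ℤ[T]. -/
open Polynomial

/-- the pair `(X² + 2T·X + 2T, X + 1)` over `ℤ[T]` has the first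
polynomial monic of degree 2, the second of degree < 2, and
`res_{2,2}(X² + 2TX + 2T, X + 1)` a unit of `ℤ[T]`. -/
theorem homotopy_two :
    ((X : Polynomial (Polynomial ℤ)) ^ 2 + C (2 * X) * X + C (2 * X)).Monic ∧
    ((X : Polynomial (Polynomial ℤ)) ^ 2 + C (2 * X) * X + C (2 * X)).natDegree = 2 ∧
    ((X : Polynomial (Polynomial ℤ)) + 1).degree < 2 ∧
    IsUnit (res 2 2 ((X : Polynomial (Polynomial ℤ)) ^ 2 + C (2 * X) * X + C (2 * X))
      ((X : Polynomial (Polynomial ℤ)) + 1)) := by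
  set f : Polynomial (Polynomial ℤ) := X ^ 2 + C (2 * X) * X + C (2 * X) with hf
  have hmonic : f.Monic := by
    rw [hf, add_assoc]
    apply Polynomial.monic_X_pow_add
    refine lt_of_le_of_lt ?_ (by norm_num : (1 : WithBot ℕ) < 2)
    compute_degree
  have hdeg : f.natDegree = 2 := by
    rw [hf]
    compute_degree!
  refine ⟨hmonic, hdeg, ?_, ?_⟩
  · have : ((X : Polynomial (Polynomial ℤ)) + 1).degree = 1 := by
      simpa using Polynomial.degree_X_add_C (1 : Polynomial ℤ)
    rw [this]; norm_num
  · have : res 2 2 f ((X : Polynomial (Polynomial ℤ)) + 1) = 1 := by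
      have hM : sylvesterMatrix 2 2 f ((X : Polynomial (Polynomial ℤ)) + 1) =
          (!![1, 0, 0, 0; 2*X, 1, 1, 0; 2*X, 2*X, 1, 1; 0, 2*X, 0, 1] :
            Matrix (Fin (2+2)) (Fin (2+2)) (Polynomial ℤ)) := by
        apply Matrix.ext
        intro i j
        fin_cases i <;> fin_cases j <;>
          norm_num [sylvesterMatrix, hf, Matrix.vecHead, Matrix.vecTail, coeff_one, coeff_X, Fin.ext_iff]
      rw [res, hM]
      simp [Matrix.det_succ_row_zero, Fin.sum_univ_succ]
    rw [this]
    exact isUnit_one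
end

section
/- The pair of polynomials (X² + 2T·X + 2T, X + (2T - 1)) over ℤ[T] satisfies: the first is monic of degree 2 in X, the second has X-degree < 2, and res_{2,2}(X² + 2TX + 2T, X + 2T - 1) is a unit in ℤ[T]. -/
open Polynomial

/-- the pair `(X² + 2T·X + 2T, X + (2T - 1))` over `ℤ[T]` has the
first polynomial monic of degree 2 in X, the second of X-degree < 2, and
`res_{2,2}(X² + 2TX + 2T, X + 2T - 1)` a unit of `ℤ[T]`. -/
theorem homotopy_three :
    ((X : Polynomial (Polynomial ℤ)) ^ 2 + C (2 * X) * X + C (2 * X)).Monic ∧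
    ((X : Polynomial (Polynomial ℤ)) ^ 2 + C (2 * X) * X + C (2 * X)).natDegree = 2 ∧
    ((X : Polynomial (Polynomial ℤ)) + C (2 * X - 1)).degree < 2 ∧
    IsUnit (res 2 2 ((X : Polynomial (Polynomial ℤ)) ^ 2 + C (2 * X) * X + C (2 * X))
      ((X : Polynomial (Polynomial ℤ)) + C (2 * X - 1))) := by
  refine ⟨by monicity!, by compute_degree!, ?_, ?_⟩
  · rw [degree_X_add_C]; norm_num
  · have : res 2 2 ((X : Polynomial (Polynomial ℤ)) ^ 2 + C (2 * X) * X + C (2 * X))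
        ((X : Polynomial (Polynomial ℤ)) + C (2 * X - 1)) = 1 := by
      show Matrix.det _ = 1
      have hm : sylvesterMatrix 2 2 ((X : Polynomial (Polynomial ℤ)) ^ 2 + C (2 * X) * X + C (2 * X))
          ((X : Polynomial (Polynomial ℤ)) + C (2 * X - 1)) =
          !![1, 0, 0, 0; 2 * X, 1, 1, 0; 2 * X, 2 * X, 2 * X - 1, 1; 0, 2 * X, 0, 2 * X - 1] := by
        apply Matrix.ext
        intro i j
        fin_cases i <;> fin_cases j <;>
          norm_num [sylvesterMatrix, coeff_add, coeff_X_pow, coeff_C, coeff_X, coeff_C_mul,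
            coeff_one, coeff_sub] <;> decide
      rw [hm]
      simp [Matrix.det_succ_row_zero, Fin.sum_univ_succ]
      ring
    rw [this]; exact isUnit_one
end

section
/- The pair of polynomials (X² - T·X + T, X - 1) over ℤ[T] satisfies: the first is monic of degree 2 in X, the second has X-degree < 2, and res_{2,2}(X² - TX + T, X - 1) is a unit in ℤ[T]. -/
open Polynomial

/-- the pair `(X² - T·X + T, X - 1)` over `ℤ[T]` has the first
polynomial monic of degree 2 in X, the second of X-degree < 2, and
`res_{2,2}(X² - TX + T, X - 1)` a unit of `ℤ[T]`. -/
theorem homotopy_four :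
    ((X : Polynomial (Polynomial ℤ)) ^ 2 - C (X : Polynomial ℤ) * X + C (X : Polynomial ℤ)).Monic ∧
    ((X : Polynomial (Polynomial ℤ)) ^ 2 - C (X : Polynomial ℤ) * X + C (X : Polynomial ℤ)).natDegree = 2 ∧
    ((X : Polynomial (Polynomial ℤ)) - 1).degree < 2 ∧
    IsUnit (res 2 2 ((X : Polynomial (Polynomial ℤ)) ^ 2 - C (X : Polynomial ℤ) * X + C (X : Polynomial ℤ))
      ((X : Polynomial (Polynomial ℤ)) - 1)) := by

  have hpoly : ((X : Polynomial (Polynomial ℤ)) ^ 2 - C (X : Polynomial ℤ) * X + C (X : Polynomial ℤ)) =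
      X ^ 2 + (-(C (X : Polynomial ℤ)) * X + C (X : Polynomial ℤ)) := by ring
  have hd : (-(C (X : Polynomial ℤ)) * X + C (X : Polynomial ℤ)).degree < ((2:ℕ) : WithBot ℕ) := by
    apply lt_of_le_of_lt (degree_add_le _ _)
    apply max_lt
    · exact lt_of_le_of_lt (degree_mul_le _ _)
        (by
          have h1 := le_trans (degree_neg (C (X : Polynomial ℤ))).le (degree_C_le)
          have h2 := degree_X_le (R := Polynomial ℤ)
          calc (-(C (X:Polynomial ℤ))).degree + X.degree ≤ 0 + 1 := add_le_add h1 h2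
          _ < 2 := by norm_num)
    · exact lt_of_le_of_lt degree_C_le (by norm_num)
  have hm := monic_X_pow_add hd
  rw [← hpoly] at hm
  refine ⟨hm, ?_, ?_, ?_⟩
  · rw [hpoly]; compute_degree!
  · exact lt_of_le_of_lt (degree_sub_le _ _) (by simp)
  · have hres : res 2 2 ((X : Polynomial (Polynomial ℤ)) ^ 2 - C (X : Polynomial ℤ) * X + C (X : Polynomial ℤ))
        ((X : Polynomial (Polynomial ℤ)) - 1) = 1 := by
      set T : Polynomial ℤ := X
      set f : Polynomial (Polynomial ℤ) := X ^ 2 - C T * X + C T with hf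
      set g : Polynomial (Polynomial ℤ) := X - 1 with hg
      have hf0 : f.coeff 0 = T := by simp [hf]
      have hf1 : f.coeff 1 = -T := by simp [hf]
      have hf2 : f.coeff 2 = 1 := by simp [hf, coeff_X_pow]
      have hf3 : f.coeff 3 = 0 := by simp [hf, coeff_X_pow]
      have hg0 : g.coeff 0 = -1 := by simp [hg]
      have hg1 : g.coeff 1 = 1 := by simp [hg, coeff_one]
      have hg2 : g.coeff 2 = 0 := by simp [hg, coeff_one, coeff_X]
      have hM : sylvesterMatrix 2 2 f g =
          !![1, 0, 0, 0; -T, 1, 1, 0; T, -T, -1, 1; 0, T, 0, -1] := by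
        refine Matrix.ext fun i j => ?_
        fin_cases i <;> fin_cases j <;>
          simp [sylvesterMatrix, hf0, hf1, hf2, hf3, hg0, hg1, hg2,
            show ((1 : Fin (2+2)) ≤ ⟨2, by omega⟩) from by decide,
            show ((1 : Fin (2+2)) ≤ ⟨3, by omega⟩) from by decide,
            show (((3 : Fin (2+2)) : ℕ)) = 3 from rfl]
      rw [res, hM]
      simp [Matrix.det_succ_row_zero, Fin.sum_univ_succ]
    rw [hres]
    exact isUnit_one
end
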